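/- For each j = 1, 2, ..., k, let G_j be a d_j-regular simple graph on n_j vertices with spectrum σ(G_j). Let G̃ be the graph obtained from the disjoint union of G₁, G₂, ..., G_k by connecting each vertex of G_j to every vertex of G_{j+1}, for j = 1, ..., k−1. Let Ĉ be the k×k symmetric tridiagonal matrix with diagonal entries d₁, ..., d_k and with (j, j+1) and (j+1, j) entries equal to √(n_j n_{j+1}). Then the energy of G̃ satisfies E(G̃) = Σ_{j=1}^{k} (E(G_j) − d_j) + E(Ĉ). -/

import Mathlib

/-!
Let `U` be the matrix whose `j`-th column is the all-ones vector of block `j` scaled to unit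
length, a `d_j`-eigenvector of `A(G_j)`, and let `D = diag(d_j)`. Then
`A(G̃) = diag(A(G_j)) + U (Ĉ - D) Uᵀ` with `UᵀU = 1` and `diag(A(G_j)) U = U D`. For `x` outside
the spectra, `Uᵀ (x - diag(A(G_j)))⁻¹ U = (x - D)⁻¹`, so the Weinstein–Aronszajn identity gives
`χ(A(G̃)) · ∏ (X - d_j) = ∏ χ(A(G_j)) · χ(Ĉ)`: the spectrum of `G̃` together with the `d_j` is the
union of the spectra of the `G_j` and of `Ĉ`. Summing absolute values gives the energy formula.
-/

open Matrix Polynomial SimpleGraph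

/-- The energy of a real square matrix: the sum of the absolute values of its
eigenvalues (roots of the characteristic polynomial), with multiplicity. -/
noncomputable def energy {ι : Type*} [Fintype ι] [DecidableEq ι]
    (M : Matrix ι ι ℝ) : ℝ :=
  (M.charpoly.roots.map fun x => |x|).sum

namespace Matrix

theorem charpoly_blockDiagonal' {R ι : Type*} [CommRing R] [Fintype ι] [DecidableEq ι]
    {m : ι → Type*} [∀ i, Fintype (m i)] [∀ i, DecidableEq (m i)]
    (M : ∀ i, Matrix (m i) (m i) R) :
    (blockDiagonal' M).charpoly = ∏ i, (M i).charpoly := by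
  -- `blockDiagonal' M` is block triangular for any order on `ι`.
  let _ : LinearOrder ι := LinearOrder.lift' _ (Fintype.equivFin ι).injective
  have hblock : ∀ i, (blockDiagonal' M).toSquareBlock Sigma.fst i
      = reindex (Equiv.sigmaSubtype i).symm (Equiv.sigmaSubtype i).symm (M i) := by
    intro i
    ext ⟨⟨j, a⟩, hj⟩ ⟨⟨j', b⟩, hj'⟩
    dsimp only at hj hj'
    subst hj hj'
    simp [toSquareBlock_def]
  rw [(blockTriangular_blockDiagonal' M).charpoly]
  simp_rw [hblock, charpoly_reindex]
  refine Finset.prod_subset (Finset.subset_univ _) fun i _ hi => ?_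
  have : IsEmpty (m i) := ⟨fun a => hi <| by
    convert Finset.mem_image_of_mem Sigma.fst (Finset.mem_univ (⟨i, a⟩ : Σ i, m i))⟩
  exact charpoly_isEmpty

theorem charpoly_add_mul_mul_mul_charpoly {K m n : Type*} [Field K] [Infinite K]
    [Fintype m] [DecidableEq m] [Fintype n] [DecidableEq n]
    {A : Matrix m m K} {U : Matrix m n K} {W : Matrix n m K} {D : Matrix n n K}
    (hWU : W * U = 1) (hAU : A * U = U * D) (C : Matrix n n K) :
    (A + U * C * W).charpoly * D.charpoly = A.charpoly * (D + C).charpoly := by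
  refine eq_of_infinite_eval_eq _ _ <|
    ((finite_setOfPred_isRoot (mul_ne_zero (charpoly_monic A).ne_zero
      (charpoly_monic D).ne_zero)).infinite_compl).mono fun x hx => ?_
  simp only [Set.mem_compl_iff, Set.mem_ofPred_eq, IsRoot, eval_mul, mul_eq_zero, not_or,
    eval_charpoly] at hx ⊢
  set M := scalar m x - A
  set E := scalar n x - D
  have hM : IsUnit M.det := Ne.isUnit hx.1
  have hE : IsUnit E.det := Ne.isUnit hx.2
  have hMU : M * U = U * E := by
    ext i j
    simp [M, E, Matrix.sub_mul, Matrix.mul_sub, hAU, mul_comm]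
  have hMinvU : M⁻¹ * U = U * E⁻¹ := by
    calc M⁻¹ * U = M⁻¹ * (U * E * E⁻¹) := by rw [mul_nonsing_inv_cancel_right (A := E) U hE]
      _ = M⁻¹ * (M * U) * E⁻¹ := by rw [hMU]; simp only [Matrix.mul_assoc]
      _ = U * E⁻¹ := by rw [nonsing_inv_mul_cancel_left (A := M) U hM]
  have hsplit : scalar m x - (A + U * C * W) = M + U * (-(C * W)) := by
    simp only [M, Matrix.mul_neg, ← Matrix.mul_assoc]; abel
  calc (scalar m x - (A + U * C * W)).det * E.det
      = M.det * ((1 - C * E⁻¹) * E).det := by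
        rw [hsplit, det_add_mul _ _ hM, Matrix.mul_assoc _ M⁻¹, hMinvU, Matrix.neg_mul,
          Matrix.mul_assoc C, ← Matrix.mul_assoc W, hWU, Matrix.one_mul, ← sub_eq_add_neg,
          det_mul, mul_assoc]
    _ = M.det * (scalar n x - (D + C)).det := by
        rw [Matrix.sub_mul, Matrix.one_mul, Matrix.mul_assoc, nonsing_inv_mul _ hE,
          Matrix.mul_one]
        congr 2
        simp only [E]; abel

variable {R ι : Type*} {m : ι → Type*}

def blockCols [Zero R] [DecidableEq ι] (u : ∀ i, m i → R) : Matrix (Σ i, m i) ι R :=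
  of fun x i => if x.1 = i then u x.1 x.2 else 0

section blockCols

variable [CommRing R] [Fintype ι] [DecidableEq ι]

theorem blockDiagonal'_mul_blockCols [∀ i, Fintype (m i)] {M : ∀ i, Matrix (m i) (m i) R}
    {u : ∀ i, m i → R} {d : ι → R} (h : ∀ i, M i *ᵥ u i = d i • u i) :
    blockDiagonal' M * blockCols u = blockCols u * diagonal d := by
  ext ⟨i, a⟩ j
  rw [mul_diagonal, mul_apply, Fintype.sum_sigma,
    Finset.sum_eq_single i (fun i' _ hi' => Finset.sum_eq_zero fun b _ => by
      rw [blockDiagonal'_apply_ne _ _ _ (Ne.symm hi'), zero_mul]) (by simp)]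
  by_cases hij : i = j
  · subst hij
    simpa [blockCols, mulVec, dotProduct, mul_comm] using congrFun (h i) a
  · simp [blockCols, hij]

theorem transpose_blockCols_mul_blockCols [∀ i, Fintype (m i)] (u : ∀ i, m i → R) :
    (blockCols u)ᵀ * blockCols u = diagonal fun i => u i ⬝ᵥ u i := by
  ext i j
  rw [mul_apply, Fintype.sum_sigma]
  by_cases hij : i = j
  · subst hij
    rw [Finset.sum_eq_single i (fun i' _ hi' => by simp [blockCols, hi']) (by simp)]
    simp [blockCols, dotProduct]
  · simp [blockCols, hij, Ne.symm hij]

theorem blockCols_mul_mul_transpose_apply (u : ∀ i, m i → R) (C : Matrix ι ι R)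
    (x y : Σ i, m i) :
    (blockCols u * C * (blockCols u)ᵀ) x y = u x.1 x.2 * C x.1 y.1 * u y.1 y.2 := by
  simp [blockCols, mul_apply]

end blockCols

end Matrix

theorem energy_add_energy_of_charpoly_mul_eq {ι₁ ι₂ ι₃ ι₄ : Type*}
    [Fintype ι₁] [DecidableEq ι₁] [Fintype ι₂] [DecidableEq ι₂]
    [Fintype ι₃] [DecidableEq ι₃] [Fintype ι₄] [DecidableEq ι₄]
    {M₁ : Matrix ι₁ ι₁ ℝ} {M₂ : Matrix ι₂ ι₂ ℝ} {M₃ : Matrix ι₃ ι₃ ℝ} {M₄ : Matrix ι₄ ι₄ ℝ}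
    (h : M₁.charpoly * M₂.charpoly = M₃.charpoly * M₄.charpoly) :
    energy M₁ + energy M₂ = energy M₃ + energy M₄ := by
  have := congrArg (fun p : ℝ[X] => (p.roots.map fun x => |x|).sum) h
  simpa [energy, roots_mul, (charpoly_monic _).ne_zero] using this

theorem energy_blockDiagonal' {ι : Type*} {m : ι → Type*} [Fintype ι] [DecidableEq ι]
    [∀ i, Fintype (m i)] [∀ i, DecidableEq (m i)] (M : ∀ i, Matrix (m i) (m i) ℝ) :
    energy (blockDiagonal' M) = ∑ i, energy (M i) := by
  simp [energy, charpoly_blockDiagonal', roots_prod, Finset.prod_ne_zero_iff,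
    (charpoly_monic _).ne_zero, Multiset.map_bind, Multiset.sum_bind]

theorem energy_diagonal {ι : Type*} [Fintype ι] [DecidableEq ι] (d : ι → ℝ) :
    energy (diagonal d) = ∑ i, |d i| := by
  simp [energy, charpoly_diagonal, roots_prod, Finset.prod_ne_zero_iff, X_sub_C_ne_zero]

theorem adjMatrix_eq_blockDiagonal'_add (k : ℕ) (n d : Fin k → ℕ)
    (G : ∀ j, SimpleGraph (Fin (n j + 1))) [∀ j, DecidableRel (G j).Adj]
    (Gtilde : SimpleGraph ((j : Fin k) × Fin (n j + 1))) [DecidableRel Gtilde.Adj]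
    (hGtilde : ∀ x y : (j : Fin k) × Fin (n j + 1),
      Gtilde.Adj x y ↔
        ((∃ h : x.1 = y.1, (G y.1).Adj (Fin.cast (by rw [h]) x.2) y.2)
          ∨ x.1.val + 1 = y.1.val ∨ y.1.val + 1 = x.1.val))
    (Chat : Matrix (Fin k) (Fin k) ℝ)
    (hChat : ∀ p q : Fin k, Chat p q =
      if p = q then (d p : ℝ)
      else if p.val + 1 = q.val ∨ q.val + 1 = p.val then
        Real.sqrt ((n p + 1) * (n q + 1))
      else 0) :
    Gtilde.adjMatrix ℝ = blockDiagonal' (fun j => (G j).adjMatrix ℝ)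
      + blockCols (fun j _ => (√((n j : ℝ) + 1))⁻¹) * (Chat - diagonal fun j => (d j : ℝ))
        * (blockCols fun j _ => (√((n j : ℝ) + 1))⁻¹)ᵀ := by
  ext ⟨p, a⟩ ⟨q, b⟩
  rw [Matrix.add_apply, blockCols_mul_mul_transpose_apply, adjMatrix_apply, Matrix.sub_apply,
    hChat]
  simp only [hGtilde]
  by_cases hpq : p = q
  · subst hpq
    simp
  · simp only [hpq, blockDiagonal'_apply_ne _ _ _ hpq, diagonal_apply_ne _ hpq,
      IsEmpty.exists_iff, false_or, if_false, sub_zero, zero_add]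
    split_ifs with hcons
    · have hp := Real.sqrt_pos.2 (by positivity : (0 : ℝ) < n p + 1)
      have hq := Real.sqrt_pos.2 (by positivity : (0 : ℝ) < n q + 1)
      rw [Real.sqrt_mul (by positivity)]
      field_simp
    · simp

/-- Energy of the sequential join of `k` regular graphs (each vertex of `G_j`
joined to each vertex of `G_{j+1}`). -/
theorem stmt_17 (k : ℕ) (n d : Fin k → ℕ)
    (G : ∀ j, SimpleGraph (Fin (n j + 1))) [∀ j, DecidableRel (G j).Adj]
    (hreg : ∀ j, (G j).IsRegularOfDegree (d j))
    (Gtilde : SimpleGraph ((j : Fin k) × Fin (n j + 1))) [DecidableRel Gtilde.Adj]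
    (hGtilde : ∀ x y : (j : Fin k) × Fin (n j + 1),
      Gtilde.Adj x y ↔
        ((∃ h : x.1 = y.1, (G y.1).Adj (Fin.cast (by rw [h]) x.2) y.2)
          ∨ x.1.val + 1 = y.1.val ∨ y.1.val + 1 = x.1.val))
    (Chat : Matrix (Fin k) (Fin k) ℝ)
    (hChat : ∀ p q : Fin k, Chat p q =
      if p = q then (d p : ℝ)
      else if p.val + 1 = q.val ∨ q.val + 1 = p.val then
        Real.sqrt ((n p + 1) * (n q + 1))
      else 0) :
    energy (Gtilde.adjMatrix ℝ)
      = (∑ j, (energy ((G j).adjMatrix ℝ) - (d j : ℝ))) + energy Chat := by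
  set u : ∀ j, Fin (n j + 1) → ℝ := fun j _ => (√((n j : ℝ) + 1))⁻¹
  have hunit : (blockCols u)ᵀ * blockCols u = 1 := by
    rw [transpose_blockCols_mul_blockCols, ← diagonal_one]
    congr! with j
    simp [u, dotProduct, ← mul_inv, Real.mul_self_sqrt (by positivity : (0 : ℝ) ≤ n j + 1),
      mul_inv_cancel₀ (by positivity : (n j : ℝ) + 1 ≠ 0)]
  have heig : blockDiagonal' (fun j => (G j).adjMatrix ℝ) * blockCols u
      = blockCols u * diagonal fun j => (d j : ℝ) :=
    blockDiagonal'_mul_blockCols fun j => by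
      ext a
      simp [u, hreg j a]
  have hchar := charpoly_add_mul_mul_mul_charpoly hunit heig (Chat - diagonal fun j => (d j : ℝ))
  rw [add_sub_cancel, ← adjMatrix_eq_blockDiagonal'_add k n d G Gtilde hGtilde Chat hChat]
    at hchar
  have henergy := energy_add_energy_of_charpoly_mul_eq hchar
  rw [energy_blockDiagonal', energy_diagonal] at henergy
  simp only [Nat.abs_cast] at henergy
  rw [Finset.sum_sub_distrib]
  linarith
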